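/- Let l_0 > 0, let (l_i)_{i≥1} and (x_i)_{i≥1} be sequences of positive reals, and suppose there are real numbers μ_X > 0 and μ_L with 0 < μ_L < ∞ such that (x_1 + ... + x_n)/n → μ_X and (l_0 + l_1 + ... + l_n)/n → μ_L as n → ∞. Then the series Σ_{i=1}^{∞} x_i/(l_0 + l_1 + ... + l_i) diverges to ∞. -/

import Mathlib

/-!
Comparing each term with the largest length in its dyadic block, the block sum over `(m, 2m]` is at
least `(X (2m) - X m) / L (2m)`, where `X` are the partial sums of the steps and `L` the lengths.
By the Cesàro limits this tends to `(2 μX - μX) / (2 μL) > 0`, so the partial sums, which are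
monotone, gain a fixed positive amount each time the index doubles.
-/

open Finset Filter Topology

theorem Monotone.tendsto_atTop_of_eventually_add_le_two_mul {S : ℕ → ℝ} (hS : Monotone S)
    {c : ℝ} (hc : 0 < c) (h : ∀ᶠ m in atTop, S m + c ≤ S (2 * m)) : Tendsto S atTop atTop := by
  obtain ⟨N, hN⟩ := eventually_atTop.mp h
  have hdoubling : ∀ k : ℕ, S N + k * c ≤ S (N * 2 ^ k) := by
    intro k
    induction k with
    | zero => simp
    | succ k ih =>
      have := hN (N * 2 ^ k) (Nat.le_mul_of_pos_right N (by positivity))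
      rw [show 2 * (N * 2 ^ k) = N * 2 ^ (k + 1) by ring] at this
      push_cast
      linarith
  have hlinear : Tendsto (fun k : ℕ => S N + k * c) atTop atTop :=
    tendsto_atTop_add_const_left _ _ (tendsto_natCast_atTop_atTop.atTop_mul_const hc)
  refine tendsto_atTop_atTop_of_monotone hS fun b => ?_
  obtain ⟨k, hk⟩ := ((tendsto_atTop_mono hdoubling hlinear).eventually_ge_atTop b).exists
  exact ⟨_, hk⟩

theorem sum_Icc_one_sub_sum_Icc_one {M : Type*} [AddCommGroup M] (f : ℕ → M) {m n : ℕ}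
    (hmn : m ≤ n) : ∑ i ∈ Icc 1 n, f i - ∑ i ∈ Icc 1 m, f i = ∑ i ∈ Ioc m n, f i := by
  rw [← zero_add 1, Icc_add_one_left_eq_Ioc, Icc_add_one_left_eq_Ioc, ← sum_Ioc_consecutive f m.zero_le hmn, add_sub_cancel_left]

theorem tendsto_comp_two_mul {α : Type*} {f : ℕ → α} {l : Filter α} (hf : Tendsto f atTop l) :
    Tendsto (fun m => f (2 * m)) atTop l :=
  hf.comp (tendsto_atTop_mono (fun m => Nat.le_mul_of_pos_left m two_pos) tendsto_id)

theorem tendsto_dyadic_increment {X L : ℕ → ℝ} {α μ : ℝ} (hμ : μ ≠ 0)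
    (hX : Tendsto (fun n : ℕ => X n / n) atTop (𝓝 α))
    (hL : Tendsto (fun n : ℕ => L n / n) atTop (𝓝 μ)) :
    Tendsto (fun m => (X (2 * m) - X m) / L (2 * m)) atTop (𝓝 (α / (2 * μ))) := by
  have hlim : Tendsto (fun m : ℕ => (2 * (X (2 * m) / ↑(2 * m)) - X m / m) /
      (2 * (L (2 * m) / ↑(2 * m)))) atTop (𝓝 ((2 * α - α) / (2 * μ))) :=
    (((tendsto_comp_two_mul hX).const_mul 2).sub hX).div
      ((tendsto_comp_two_mul hL).const_mul 2) (mul_ne_zero two_ne_zero hμ)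
  rw [show 2 * α - α = α by ring] at hlim
  refine hlim.congr' ((eventually_ne_atTop 0).mono fun m hm => ?_)
  have hm' : (m : ℝ) ≠ 0 := Nat.cast_ne_zero.mpr hm
  push_cast
  field_simp

theorem tendsto_sum_div_atTop_of_cesaro {a L : ℕ → ℝ} {α μ : ℝ}
    (ha : ∀ i, 1 ≤ i → 0 ≤ a i) (hL : Monotone L) (hL0 : 0 < L 0) (hα : 0 < α) (hμ : 0 < μ)
    (haavg : Tendsto (fun n : ℕ => (∑ i ∈ Icc 1 n, a i) / n) atTop (𝓝 α))
    (hLavg : Tendsto (fun n : ℕ => L n / n) atTop (𝓝 μ)) :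
    Tendsto (fun n => ∑ i ∈ Icc 1 n, a i / L i) atTop atTop := by
  have hLpos (n : ℕ) : 0 < L n := hL0.trans_le (hL n.zero_le)
  have hmono : Monotone fun n => ∑ i ∈ Icc 1 n, a i / L i := fun m n hmn =>
    sum_le_sum_of_subset_of_nonneg (Icc_subset_Icc_right hmn) fun i hi _ =>
      div_nonneg (ha i (mem_Icc.mp hi).1) (hLpos i).le
  have hblock (m : ℕ) : (∑ i ∈ Icc 1 (2 * m), a i - ∑ i ∈ Icc 1 m, a i) / L (2 * m) ≤
      ∑ i ∈ Icc 1 (2 * m), a i / L i - ∑ i ∈ Icc 1 m, a i / L i := by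
    rw [sum_Icc_one_sub_sum_Icc_one _ (by omega), sum_Icc_one_sub_sum_Icc_one _ (by omega),
      sum_div]
    refine sum_le_sum fun i hi => ?_
    obtain ⟨him, hi2m⟩ := mem_Ioc.mp hi
    exact div_le_div_of_nonneg_left (ha i (by omega)) (hLpos i) (hL hi2m)
  have hc : 0 < α / (2 * μ) / 2 := by positivity
  refine hmono.tendsto_atTop_of_eventually_add_le_two_mul hc ?_
  filter_upwards [(tendsto_dyadic_increment hμ.ne' haavg hLavg).eventually
    (eventually_ge_nhds (half_lt_self (by positivity)))] with m hm
  linarith [hblock m]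

/-- **Deterministic core of Lemma 2.**
`l i` and `x i` for `i ≥ 1` are positive reals (the stretches and steps), `l0 > 0`
is the initial rope length, and the running averages converge:
`(x₁ + ⋯ + xₙ)/n → μX > 0` and `(l0 + l₁ + ⋯ + lₙ)/n → μL` with `0 < μL < ∞`.
Then the series `∑_{i≥1} x i / (l0 + l₁ + ⋯ + lᵢ)` diverges to `∞`,
i.e. its partial sums tend to infinity. -/
theorem ant_series_diverges_of_cesaro
    (l0 : ℝ) (hl0 : 0 < l0) (l x : ℕ → ℝ)
    (hl : ∀ i, 1 ≤ i → 0 < l i) (hx : ∀ i, 1 ≤ i → 0 < x i)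
    (μX μL : ℝ) (hμX : 0 < μX) (hμL : 0 < μL)
    (hxavg : Tendsto (fun n : ℕ => (∑ i ∈ Finset.Icc 1 n, x i) / n) atTop (nhds μX))
    (hlavg : Tendsto (fun n : ℕ => (l0 + ∑ i ∈ Finset.Icc 1 n, l i) / n) atTop (nhds μL)) :
    Tendsto
      (fun n : ℕ => ∑ i ∈ Finset.Icc 1 n, x i / (l0 + ∑ j ∈ Finset.Icc 1 i, l j))
      atTop atTop := by
  have hlength_mono : Monotone fun n => l0 + ∑ j ∈ Icc 1 n, l j := fun m n hmn =>
    add_le_add_right (sum_le_sum_of_subset_of_nonneg (Icc_subset_Icc_right hmn)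
      fun i hi _ => (hl i (mem_Icc.mp hi).1).le) l0
  exact tendsto_sum_div_atTop_of_cesaro (fun i hi => (hx i hi).le) hlength_mono
    (by simpa using hl0) hμX hμL hxavg hlavg
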